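/- Let N ≥ 1, σ ∈ (1,2), β ∈ (σ-1, 1], α ∈ (0,1], Γ > 0, C₀ > 0. Let (K(y,·))_{y ∈ ℝ^N} be a family of measurable kernels on ℝ^N \ {0}, each even in z, with 0 ≤ K(y,z) ≤ Γ|z|^{-(N+σ)} and |K(y₁,z) - K(y₂,z)| ≤ C₀ ‖y₁ - y₂‖^α |z|^{-(N+σ)} for all y₁, y₂ and z ≠ 0. Let φ : ℝ^N → ℝ be bounded with |φ| ≤ M₀ and differentiable with ∇φ β-Hölder with constant M₁. Then there exists a constant C depending only on N, σ, β such that for all x, y₁, y₂ ∈ ℝ^N, |L_{y₁}φ(x) - L_{y₂}φ(x)| ≤ C C₀ ‖y₁ - y₂‖^α (M₀ + M₁), where L_yφ(x) = ½ ∫_{ℝ^N} (φ(x+z) + φ(x-z) - 2φ(x)) K(y,z) dz. -/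

import Mathlib

open MeasureTheory Metric Set Filter Module
open scoped ENNReal Topology

lemma aux_ball_integrable {N : ℕ} (hN : 1 ≤ N) {e : ℝ} (he : -(N:ℝ) < e) (he0 : e < 0) :
    IntegrableOn (fun z : EuclideanSpace ℝ (Fin N) => ‖z‖ ^ e) (ball 0 1) volume := by
  have hmeas : Measurable fun z : EuclideanSpace ℝ (Fin N) => ‖z‖ ^ e := by fun_prop
  refine ⟨(hmeas.aestronglyMeasurable).restrict, ?_⟩
  rw [hasFiniteIntegral_iff_norm]
  have hnn : ∀ z : EuclideanSpace ℝ (Fin N), 0 ≤ ‖z‖ ^ e := fun z => Real.rpow_nonneg (norm_nonneg z) e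
  calc ∫⁻ z in ball (0 : EuclideanSpace ℝ (Fin N)) 1, ENNReal.ofReal ‖‖z‖ ^ e‖
      = ∫⁻ z in ball (0 : EuclideanSpace ℝ (Fin N)) 1, ENNReal.ofReal (‖z‖ ^ e) := by
        refine lintegral_congr fun z => ?_
        rw [Real.norm_of_nonneg (hnn z)]
    _ = ∫⁻ t in Ioi (0:ℝ), volume.restrict (ball (0 : EuclideanSpace ℝ (Fin N)) 1)
          {a | t ≤ ‖a‖ ^ e} := by
        exact lintegral_eq_lintegral_meas_le _ (Eventually.of_forall hnn)
          hmeas.aemeasurable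
    _ ≤ ∫⁻ t in Ioi (0:ℝ),
          ENNReal.ofReal (min 1 (t ^ e⁻¹) ^ N) * volume (ball (0 : EuclideanSpace ℝ (Fin N)) 1) := by
        refine setLIntegral_mono' measurableSet_Ioi fun t ht => ?_
        have ht : (0:ℝ) < t := ht
        rw [Measure.restrict_apply' measurableSet_ball]
        have hsub : {a : EuclideanSpace ℝ (Fin N) | t ≤ ‖a‖ ^ e} ∩ ball 0 1 ⊆
            closedBall 0 (min 1 (t ^ e⁻¹)) := by
          rintro a ⟨ha1, ha2⟩
          have ha0 : a ≠ 0 := by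
            rintro rfl
            simp only [mem_setOf_eq, norm_zero, Real.zero_rpow he0.ne] at ha1
            linarith
          have hna : 0 < ‖a‖ := norm_pos_iff.2 ha0
          rw [mem_closedBall_zero_iff]
          refine le_min ?_ ?_
          · exact (mem_ball_zero_iff.1 ha2).le
          · exact (Real.le_rpow_inv_iff_of_neg hna ht he0).2 ha1
        calc volume ({a : EuclideanSpace ℝ (Fin N) | t ≤ ‖a‖ ^ e} ∩ ball 0 1)
            ≤ volume (closedBall (0 : EuclideanSpace ℝ (Fin N)) (min 1 (t ^ e⁻¹))) :=
              measure_mono hsub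
          _ = ENNReal.ofReal (min 1 (t ^ e⁻¹) ^ finrank ℝ (EuclideanSpace ℝ (Fin N))) *
              volume (ball (0 : EuclideanSpace ℝ (Fin N)) 1) :=
              Measure.addHaar_closedBall _ _ (le_min zero_le_one (Real.rpow_nonneg ht.le _))
          _ = _ := by rw [finrank_euclideanSpace_fin]
    _ < ∞ := by
        have hsplit : ∫⁻ t in Ioi (0:ℝ),
            ENNReal.ofReal (min 1 (t ^ e⁻¹) ^ N) * volume (ball (0 : EuclideanSpace ℝ (Fin N)) 1) ≤
            (∫⁻ t in Ioc (0:ℝ) 1,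
              ENNReal.ofReal (min 1 (t ^ e⁻¹) ^ N) * volume (ball (0 : EuclideanSpace ℝ (Fin N)) 1)) +
            ∫⁻ t in Ioi (1:ℝ),
              ENNReal.ofReal (min 1 (t ^ e⁻¹) ^ N) * volume (ball (0 : EuclideanSpace ℝ (Fin N)) 1) :=
          le_trans (lintegral_mono_set Ioi_subset_Ioc_union_Ioi) (lintegral_union_le _ _ _)
        refine lt_of_le_of_lt hsplit (ENNReal.add_lt_top.2 ⟨?_, ?_⟩)
        · calc ∫⁻ t in Ioc (0:ℝ) 1,
              ENNReal.ofReal (min 1 (t ^ e⁻¹) ^ N) * volume (ball (0 : EuclideanSpace ℝ (Fin N)) 1)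
              ≤ ∫⁻ _ in Ioc (0:ℝ) 1, 1 * volume (ball (0 : EuclideanSpace ℝ (Fin N)) 1) := by
                refine setLIntegral_mono' measurableSet_Ioc fun t ht => ?_
                gcongr
                refine ENNReal.ofReal_le_one.2 ?_
                refine pow_le_one₀ (le_min zero_le_one (Real.rpow_nonneg ht.1.le _)) (min_le_left _ _)
            _ < ∞ := by
                rw [setLIntegral_const, Real.volume_Ioc]
                exact ENNReal.mul_lt_top (ENNReal.mul_lt_top ENNReal.one_lt_top measure_ball_lt_top)
                  ENNReal.ofReal_lt_top
        · have hp : e⁻¹ * N < -1 := by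
            have hei : e⁻¹ < 0 := inv_neg''.2 he0
            have h1 : e * e⁻¹ = 1 := mul_inv_cancel₀ he0.ne
            nlinarith [mul_lt_mul_of_neg_right he hei]
          calc ∫⁻ t in Ioi (1:ℝ),
              ENNReal.ofReal (min 1 (t ^ e⁻¹) ^ N) * volume (ball (0 : EuclideanSpace ℝ (Fin N)) 1)
              ≤ ∫⁻ t in Ioi (1:ℝ),
                ENNReal.ofReal (t ^ (e⁻¹ * N)) * volume (ball (0 : EuclideanSpace ℝ (Fin N)) 1) := by
                refine setLIntegral_mono' measurableSet_Ioi fun t ht => ?_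
                have ht1 : (1:ℝ) < t := ht
                gcongr
                calc min 1 (t ^ e⁻¹) ^ N ≤ (t ^ e⁻¹) ^ N :=
                      pow_le_pow_left₀ (le_min zero_le_one (Real.rpow_nonneg (by linarith) _))
                        (min_le_right _ _) N
                  _ = t ^ (e⁻¹ * N) := by
                      rw [Real.rpow_mul (by linarith : (0:ℝ) ≤ t), Real.rpow_natCast]
            _ = (∫⁻ t in Ioi (1:ℝ), ENNReal.ofReal (t ^ (e⁻¹ * N))) *
                volume (ball (0 : EuclideanSpace ℝ (Fin N)) 1) :=
              lintegral_mul_const' _ _ measure_ball_lt_top.ne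
            _ < ∞ := ENNReal.mul_lt_top
                ((integrableOn_Ioi_rpow_of_lt hp one_pos).setLIntegral_lt_top) measure_ball_lt_top

lemma aux_compl_integrable {N : ℕ} (hN : 1 ≤ N) {p : ℝ} (hp : (N:ℝ) < p) :
    IntegrableOn (fun z : EuclideanSpace ℝ (Fin N) => ‖z‖ ^ (-p)) (ball 0 1)ᶜ volume := by
  have hp0 : (0:ℝ) < p := lt_of_le_of_lt (by exact_mod_cast Nat.cast_nonneg N) hp
  have hfin : (finrank ℝ (EuclideanSpace ℝ (Fin N)) : ℝ) < p := by
    rwa [finrank_euclideanSpace_fin]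
  have hbase : Integrable (fun z : EuclideanSpace ℝ (Fin N) => (2:ℝ) ^ p * (1 + ‖z‖) ^ (-p)) :=
    (integrable_one_add_norm hfin).const_mul _
  refine (hbase.restrict (s := (ball 0 1)ᶜ)).mono' ?_ ?_
  · exact (by fun_prop : Measurable fun z : EuclideanSpace ℝ (Fin N) => ‖z‖ ^ (-p)).aestronglyMeasurable.restrict
  · rw [ae_restrict_iff' measurableSet_ball.compl]
    refine Eventually.of_forall fun z hz => ?_
    have h1 : (1:ℝ) ≤ ‖z‖ := by
      simpa [mem_ball_zero_iff] using hz
    have hz0 : (0:ℝ) < ‖z‖ := by linarith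
    rw [Real.norm_of_nonneg (Real.rpow_nonneg (norm_nonneg z) _)]
    rw [Real.rpow_neg (norm_nonneg z), Real.rpow_neg (by positivity)]
    calc (‖z‖ ^ p)⁻¹ = 2 ^ p * ((2:ℝ) ^ p * ‖z‖ ^ p)⁻¹ := by
          rw [mul_inv, ← mul_assoc, mul_inv_cancel₀ (by positivity), one_mul]
      _ ≤ 2 ^ p * ((1 + ‖z‖) ^ p)⁻¹ := by
          gcongr
          calc (1 + ‖z‖) ^ p ≤ (2 * ‖z‖) ^ p :=
                  Real.rpow_le_rpow (by positivity) (by linarith) hp0.le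
              _ = 2 ^ p * ‖z‖ ^ p := Real.mul_rpow (by norm_num) (norm_nonneg z)

lemma aux_taylor {N : ℕ} {φ : EuclideanSpace ℝ (Fin N) → ℝ} (hφ : Differentiable ℝ φ)
    {β M₁ : ℝ} (hβ : 0 < β) (hM₁ : 0 ≤ M₁)
    (hM : ∀ a b, ‖gradient φ a - gradient φ b‖ ≤ M₁ * ‖a - b‖ ^ β)
    (x z : EuclideanSpace ℝ (Fin N)) :
    |φ (x + z) + φ (x - z) - 2 * φ x| ≤ 2 * M₁ * ‖z‖ ^ (β + 1) := by
  rcases eq_or_ne z 0 with rfl | hz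
  · simp only [add_zero, sub_zero, norm_zero, Real.zero_rpow (by positivity : β + 1 ≠ 0), mul_zero]
    have : φ x + φ x - 2 * φ x = 0 := by ring
    simp [this]
  have hkey : ∀ w, ‖fderiv ℝ φ w - fderiv ℝ φ x‖ = ‖gradient φ w - gradient φ x‖ := by
    intro w
    rw [gradient, gradient, ← LinearIsometryEquiv.map_sub, LinearIsometryEquiv.norm_map]
  set L := fderiv ℝ φ x with hL
  have hbound : ∀ w ∈ closedBall x ‖z‖, ‖fderiv ℝ φ w - L‖ ≤ M₁ * ‖z‖ ^ β := by
    intro w hw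
    rw [hkey w]
    calc ‖gradient φ w - gradient φ x‖ ≤ M₁ * ‖w - x‖ ^ β := hM w x
      _ ≤ M₁ * ‖z‖ ^ β := by
          gcongr
          exact mem_closedBall_iff_norm.1 hw
  have h1 : ‖φ (x + z) - φ x - L ((x + z) - x)‖ ≤ M₁ * ‖z‖ ^ β * ‖(x + z) - x‖ :=
    Convex.norm_image_sub_le_of_norm_fderiv_le' (fun w _ => hφ w) hbound
      (convex_closedBall x ‖z‖) (mem_closedBall_self (norm_nonneg z))
      (by simp [mem_closedBall_iff_norm])
  have h2 : ‖φ (x - z) - φ x - L ((x - z) - x)‖ ≤ M₁ * ‖z‖ ^ β * ‖(x - z) - x‖ :=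
    Convex.norm_image_sub_le_of_norm_fderiv_le' (fun w _ => hφ w) hbound
      (convex_closedBall x ‖z‖) (mem_closedBall_self (norm_nonneg z))
      (by simp [mem_closedBall_iff_norm])
  have e1 : (x + z) - x = z := by abel
  have e2 : (x - z) - x = -z := by abel
  rw [e1] at h1
  rw [e2, norm_neg] at h2
  have hsum : φ (x + z) + φ (x - z) - 2 * φ x =
      (φ (x + z) - φ x - L z) + (φ (x - z) - φ x - L (-z)) := by
    rw [map_neg]; ring
  have hrw : ‖z‖ ^ β * ‖z‖ = ‖z‖ ^ (β + 1) := by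
    rw [Real.rpow_add_one (norm_ne_zero_iff.2 hz)]
  calc |φ (x + z) + φ (x - z) - 2 * φ x|
      ≤ ‖φ (x + z) - φ x - L z‖ + ‖φ (x - z) - φ x - L (-z)‖ := by
        rw [hsum]; exact abs_add_le _ _
    _ ≤ M₁ * ‖z‖ ^ β * ‖z‖ + M₁ * ‖z‖ ^ β * ‖z‖ := add_le_add h1 h2
    _ = 2 * M₁ * (‖z‖ ^ β * ‖z‖) := by ring
    _ = 2 * M₁ * ‖z‖ ^ (β + 1) := by rw [hrw]

/-- The nonlocal operator `Lφ(x) = ½ ∫ (φ(x+z) + φ(x-z) - 2φ(x)) K(z) dz`. -/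
noncomputable def nonlocalOp {N : ℕ} (K : EuclideanSpace ℝ (Fin N) → ℝ)
    (φ : EuclideanSpace ℝ (Fin N) → ℝ) (x : EuclideanSpace ℝ (Fin N)) : ℝ :=
  (1 / 2) * ∫ z, (φ (x + z) + φ (x - z) - 2 * φ x) * K z

/-- continuity in `y` of the nonlocal operator with a family of kernels that is
`α`-Hölder in `y`: `|L_{y₁}φ(x) - L_{y₂}φ(x)| ≤ C·C₀·‖y₁ - y₂‖^α·(M₀ + M₁)` with
`C = C(N,σ,β)`. -/
theorem stmt10 (N : ℕ) (hN : 1 ≤ N) (σ β : ℝ) (hσ₁ : 1 < σ) (hσ₂ : σ < 2)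
    (hβ₁ : σ - 1 < β) (hβ₂ : β ≤ 1) :
    ∃ C : ℝ, ∀ (α Γ C₀ : ℝ), 0 < α → α ≤ 1 → 0 < Γ → 0 < C₀ →
      ∀ K : EuclideanSpace ℝ (Fin N) → EuclideanSpace ℝ (Fin N) → ℝ,
      (∀ y, Measurable (K y)) →
      (∀ y z, z ≠ 0 → K y (-z) = K y z) →
      (∀ y z, z ≠ 0 → 0 ≤ K y z ∧ K y z ≤ Γ * ‖z‖ ^ (-((N : ℝ) + σ))) →
      (∀ y₁ y₂ (z : EuclideanSpace ℝ (Fin N)), z ≠ 0 →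
        |K y₁ z - K y₂ z| ≤ C₀ * ‖y₁ - y₂‖ ^ α * ‖z‖ ^ (-((N : ℝ) + σ))) →
      ∀ (M₀ M₁ : ℝ) (φ : EuclideanSpace ℝ (Fin N) → ℝ),
      (∀ x, |φ x| ≤ M₀) → Differentiable ℝ φ →
      (∀ a b, ‖gradient φ a - gradient φ b‖ ≤ M₁ * ‖a - b‖ ^ β) →
      ∀ x y₁ y₂ : EuclideanSpace ℝ (Fin N),
        |nonlocalOp (K y₁) φ x - nonlocalOp (K y₂) φ x| ≤
          C * C₀ * ‖y₁ - y₂‖ ^ α * (M₀ + M₁) := by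
  have hN1 : (1:ℝ) ≤ (N:ℝ) := by exact_mod_cast hN
  have hβ0 : 0 < β := by linarith
  set e : ℝ := β + 1 - ((N:ℝ) + σ) with he_def
  have he1 : -(N:ℝ) < e := by rw [he_def]; linarith
  have he0 : e < 0 := by rw [he_def]; linarith
  have hI2int := aux_ball_integrable hN he1 he0
  have hI1int := aux_compl_integrable hN (show (N:ℝ) < (N:ℝ) + σ by linarith)
  set I₂ : ℝ := ∫ z in ball (0 : EuclideanSpace ℝ (Fin N)) 1, ‖z‖ ^ e with hI2def
  set I₁ : ℝ := ∫ z in (ball (0 : EuclideanSpace ℝ (Fin N)) 1)ᶜ, ‖z‖ ^ (-((N:ℝ) + σ)) with hI1def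
  have hI₂0 : 0 ≤ I₂ := integral_nonneg fun z => Real.rpow_nonneg (norm_nonneg z) _
  have hI₁0 : 0 ≤ I₁ := integral_nonneg fun z => Real.rpow_nonneg (norm_nonneg z) _
  refine ⟨I₂ + 2 * I₁, ?_⟩
  intro α Γ C₀ hα hα1 hΓ hC₀ K hKmeas hKeven hKbd hKhol M₀ M₁ φ hφbd hφdiff hφgrad x y₁ y₂
  -- basic positivity facts
  set u : EuclideanSpace ℝ (Fin N) := EuclideanSpace.single (⟨0, hN⟩ : Fin N) (1:ℝ) with hu
  have hunorm : ‖u‖ = 1 := by rw [hu, EuclideanSpace.norm_single]; norm_num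
  have hune : u ≠ 0 := by intro h; rw [h, norm_zero] at hunorm; norm_num at hunorm
  haveI : Nontrivial (EuclideanSpace ℝ (Fin N)) := ⟨u, 0, hune⟩
  haveI : (𝓝[≠] (0 : EuclideanSpace ℝ (Fin N))).NeBot :=
    Module.punctured_nhds_neBot ℝ (EuclideanSpace ℝ (Fin N)) 0
  have hM₀ : 0 ≤ M₀ := (abs_nonneg _).trans (hφbd x)
  have hM₁ : 0 ≤ M₁ := by
    have h := hφgrad u 0
    rw [sub_zero, hunorm, Real.one_rpow, mul_one] at h
    exact (norm_nonneg _).trans h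
  have hae : ∀ᵐ z : EuclideanSpace ℝ (Fin N), z ≠ 0 := by
    refine ae_iff.2 ?_
    have hset : {a : EuclideanSpace ℝ (Fin N) | ¬a ≠ 0} = {0} := by ext a; simp
    rw [hset]
    exact measure_singleton 0
  set f : EuclideanSpace ℝ (Fin N) → ℝ := fun z => φ (x + z) + φ (x - z) - 2 * φ x with hfdef
  have hc : Continuous φ := hφdiff.continuous
  have hfcont : Continuous f :=
    ((hc.comp (continuous_const.add continuous_id)).add
      (hc.comp (continuous_const.sub continuous_id))).sub continuous_const
  have hfb1 : ∀ z, |f z| ≤ 4 * M₀ := by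
    intro z
    have h1 := abs_le.1 (hφbd (x + z))
    have h2 := abs_le.1 (hφbd (x - z))
    have h3 := abs_le.1 (hφbd x)
    refine abs_le.2 ⟨?_, ?_⟩ <;> simp only [hfdef] <;> [linarith [h1.1, h2.1, h3.2]; linarith [h1.2, h2.2, h3.1]]
  have hfb2 : ∀ z, |f z| ≤ 2 * M₁ * ‖z‖ ^ (β + 1) := fun z =>
    aux_taylor hφdiff hβ0 hM₁ hφgrad x z
  set g₀ : EuclideanSpace ℝ (Fin N) → ℝ := fun z =>
      (ball (0 : EuclideanSpace ℝ (Fin N)) 1).indicator (fun z => 2 * M₁ * ‖z‖ ^ e) z +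
      ((ball (0 : EuclideanSpace ℝ (Fin N)) 1)ᶜ).indicator
        (fun z => 4 * M₀ * ‖z‖ ^ (-((N:ℝ) + σ))) z with hg₀def
  have hind1 : Integrable ((ball (0 : EuclideanSpace ℝ (Fin N)) 1).indicator
      (fun z => 2 * M₁ * ‖z‖ ^ e)) :=
    (integrable_indicator_iff measurableSet_ball).2 (hI2int.const_mul (2 * M₁))
  have hind2 : Integrable (((ball (0 : EuclideanSpace ℝ (Fin N)) 1)ᶜ).indicator
      (fun z => 4 * M₀ * ‖z‖ ^ (-((N:ℝ) + σ)))) :=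
    (integrable_indicator_iff measurableSet_ball.compl).2 (hI1int.const_mul (4 * M₀))
  have hg₀int : Integrable g₀ := hind1.add hind2
  have hg₀key : ∀ z : EuclideanSpace ℝ (Fin N), z ≠ 0 →
      |f z| * ‖z‖ ^ (-((N:ℝ) + σ)) ≤ g₀ z := by
    intro z hz
    have hz0 : 0 < ‖z‖ := norm_pos_iff.2 hz
    have hee : β + 1 + -((N:ℝ) + σ) = e := by rw [he_def]; ring
    by_cases hzb : z ∈ ball (0 : EuclideanSpace ℝ (Fin N)) 1
    · have hval : g₀ z = 2 * M₁ * ‖z‖ ^ e := by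
        simp only [hg₀def]
        rw [indicator_of_mem hzb, indicator_of_notMem (by simpa using hzb), add_zero]
      rw [hval]
      calc |f z| * ‖z‖ ^ (-((N:ℝ) + σ))
          ≤ 2 * M₁ * ‖z‖ ^ (β + 1) * ‖z‖ ^ (-((N:ℝ) + σ)) :=
            mul_le_mul_of_nonneg_right (hfb2 z) (Real.rpow_nonneg (norm_nonneg z) _)
        _ = 2 * M₁ * ‖z‖ ^ e := by
            rw [mul_assoc, ← Real.rpow_add hz0, hee]
    · have hval : g₀ z = 4 * M₀ * ‖z‖ ^ (-((N:ℝ) + σ)) := by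
        simp only [hg₀def]
        rw [indicator_of_notMem hzb, indicator_of_mem (mem_compl hzb), zero_add]
      rw [hval]
      exact mul_le_mul_of_nonneg_right (hfb1 z) (Real.rpow_nonneg (norm_nonneg z) _)
  have hKint : ∀ y, Integrable (fun z => f z * K y z) := by
    intro y
    refine (hg₀int.const_mul Γ).mono'
      (hfcont.aestronglyMeasurable.mul (hKmeas y).aestronglyMeasurable) ?_
    filter_upwards [hae] with z hz
    have h0 := (hKbd y z hz).1
    have h1 := (hKbd y z hz).2
    rw [Real.norm_eq_abs, abs_mul]
    calc |f z| * |K y z| = |f z| * K y z := by rw [abs_of_nonneg h0]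
      _ ≤ |f z| * (Γ * ‖z‖ ^ (-((N:ℝ) + σ))) := mul_le_mul_of_nonneg_left h1 (abs_nonneg _)
      _ = Γ * (|f z| * ‖z‖ ^ (-((N:ℝ) + σ))) := by ring
      _ ≤ Γ * g₀ z := mul_le_mul_of_nonneg_left (hg₀key z hz) hΓ.le
  have hsub : nonlocalOp (K y₁) φ x - nonlocalOp (K y₂) φ x
      = (1/2) * ∫ z, (f z * K y₁ z - f z * K y₂ z) := by
    simp only [nonlocalOp]
    rw [integral_sub (hKint y₁) (hKint y₂)]
    ring
  rw [hsub, abs_mul, (by norm_num : |(1:ℝ)/2| = 1/2)]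
  set t : ℝ := ‖y₁ - y₂‖ ^ α with htdef
  have ht0 : 0 ≤ t := Real.rpow_nonneg (norm_nonneg _) _
  have hb : |∫ z, (f z * K y₁ z - f z * K y₂ z)| ≤ ∫ z, (C₀ * t) * g₀ z := by
    rw [← Real.norm_eq_abs]
    refine norm_integral_le_of_norm_le (hg₀int.const_mul _) ?_
    filter_upwards [hae] with z hz
    rw [Real.norm_eq_abs, ← mul_sub, abs_mul]
    calc |f z| * |K y₁ z - K y₂ z|
        ≤ |f z| * (C₀ * t * ‖z‖ ^ (-((N:ℝ) + σ))) :=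
          mul_le_mul_of_nonneg_left (hKhol y₁ y₂ z hz) (abs_nonneg _)
      _ = (C₀ * t) * (|f z| * ‖z‖ ^ (-((N:ℝ) + σ))) := by ring
      _ ≤ (C₀ * t) * g₀ z := mul_le_mul_of_nonneg_left (hg₀key z hz) (by positivity)
  have hint_g₀ : ∫ z, g₀ z = 2 * M₁ * I₂ + 4 * M₀ * I₁ := by
    rw [hg₀def]
    rw [integral_add hind1 hind2, integral_indicator measurableSet_ball,
      integral_indicator measurableSet_ball.compl, integral_const_mul, integral_const_mul]
  have hint : ∫ z, (C₀ * t) * g₀ z = (C₀ * t) * (2 * M₁ * I₂ + 4 * M₀ * I₁) := by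
    rw [integral_const_mul, hint_g₀]
  rw [hint] at hb
  have hcore : M₁ * I₂ + 2 * M₀ * I₁ ≤ (I₂ + 2 * I₁) * (M₀ + M₁) := by
    nlinarith [mul_nonneg hI₂0 hM₀, mul_nonneg hI₁0 hM₁]
  calc (1/2) * |∫ z, (f z * K y₁ z - f z * K y₂ z)|
      ≤ (1/2) * ((C₀ * t) * (2 * M₁ * I₂ + 4 * M₀ * I₁)) := by linarith
    _ = (C₀ * t) * (M₁ * I₂ + 2 * M₀ * I₁) := by ring
    _ ≤ (C₀ * t) * ((I₂ + 2 * I₁) * (M₀ + M₁)) :=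
        mul_le_mul_of_nonneg_left hcore (by positivity)
    _ = (I₂ + 2 * I₁) * C₀ * t * (M₀ + M₁) := by ring
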